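/- arXiv:1203.6741 — 6 statements merged into one kernel-verified Lean document; each statement's English description precedes it below -/
import Mathlib

section
/- Let F be a field and let m, n, u, v, q, h, gzu, gyv, gzv ∈ F satisfy m ≠ 0, n ≠ 0, n·q + v ≠ 0, and v·m + u·n = 1. Define g = n/m, k = (m·q − u)/(n·q + v), S = (1 − k·g)⁻¹ (which is well defined since 1 − k·g = (m·(n·q + v))⁻¹ ≠ 0), and set A = m²·gzu·gyv, B = m²·n⁻¹·v·gzu·gyv, E = m·n·h, F₀ = (m·v − 1)·h, and L = gzv − m·n⁻¹·gzu·gyv. Then: (i) gzv + k·gzu·gyv·S = L + A·q + B; (ii) k·h·g·S = E·q + F₀; and (iii) k·h·gzu·gyv·S² = (A·q + B)·(E·q + F₀). -/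
/-!
By the Bezout identity the return difference collapses to `1 - k * g = (m * (n * q + v))⁻¹`, so
`S = m * (n * q + v)` and `k * S = m * (m * q - u)` are polynomial in `q`. The quadratic identity is
then the product of `A * q + B = m * n⁻¹ * gzu * gyv * S` and `E * q + F₀ = k * h * g * S`.
-/

section Youla

variable {K : Type*} [Field K] {m n u v q : K}

theorem youla_one_sub_controller_mul_plant (hm : m ≠ 0) (hnv : n * q + v ≠ 0)
    (hbez : v * m + u * n = 1) :
    1 - (m * q - u) / (n * q + v) * (n / m) = (m * (n * q + v))⁻¹ := by
  rw [div_mul_div_comm, one_sub_div (mul_ne_zero hnv hm)]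
  field_simp
  linear_combination hbez

theorem youla_sensitivity_eq (hm : m ≠ 0) (hnv : n * q + v ≠ 0) (hbez : v * m + u * n = 1) :
    (1 - (m * q - u) / (n * q + v) * (n / m))⁻¹ = m * (n * q + v) := by
  rw [youla_one_sub_controller_mul_plant hm hnv hbez, inv_inv]

end Youla

/-- Closed-loop quantities rewritten as affine/quadratic expressions in the
Youla parameter `q`. -/
theorem stmt_1 {𝕜 : Type*} [Field 𝕜] (m n u v q h gzu gyv gzv : 𝕜)
    (g k S A B E F₀ L : 𝕜)
    (hm : m ≠ 0) (hn : n ≠ 0) (hnv : n * q + v ≠ 0) (hbez : v * m + u * n = 1)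
    (hg : g = n / m) (hk : k = (m * q - u) / (n * q + v))
    (hS : S = (1 - k * g)⁻¹)
    (hA : A = m ^ 2 * gzu * gyv)
    (hB : B = m ^ 2 * n⁻¹ * v * gzu * gyv)
    (hE : E = m * n * h)
    (hF : F₀ = (m * v - 1) * h)
    (hL : L = gzv - m * n⁻¹ * gzu * gyv) :
    gzv + k * gzu * gyv * S = L + A * q + B ∧
    k * h * g * S = E * q + F₀ ∧
    k * h * gzu * gyv * S ^ 2 = (A * q + B) * (E * q + F₀) := by
  have hS' : S = m * (n * q + v) := by rw [hS, hk, hg, youla_sensitivity_eq hm hnv hbez]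
  have hkS : k * S = m * (m * q - u) := by rw [hk, hS', mul_left_comm, div_mul_cancel₀ _ hnv]
  have hAB : A * q + B = m * n⁻¹ * gzu * gyv * S := by rw [hA, hB, hS']; field_simp
  have hEF : k * h * g * S = E * q + F₀ := by
    rw [show k * h * g * S = k * S * h * g by ring, hkS, hg, hE, hF]
    field_simp
    linear_combination (-h) * hbez
  refine ⟨?_, hEF, ?_⟩
  · rw [add_assoc, hAB, hL, show k * gzu * gyv * S = k * S * gzu * gyv by ring, hkS, hS']
    field_simp
    linear_combination (-(m * gzu * gyv)) * hbez
  · rw [hAB, ← hEF, hg]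
    field_simp
end

section
/- Let n ∈ ℕ. The set D = {(x, y) ∈ ℝⁿ × ℝⁿ : ‖y‖ < 1} is convex, and the function g : D → ℝ defined by g(x, y) = ‖x‖² + ⟪x, y⟫²/(1 − ‖y‖²), where ⟪·,·⟫ is the standard inner product and ‖·‖ the Euclidean norm on ℝⁿ, is convex on D (jointly in (x, y)). -/
/-!
For `‖y‖ < 1`, completing the square in `v` gives
`‖x + v • y‖² - v² = g(x, y) - (⟪x, y⟫ - v (1 - ‖y‖²))² / (1 - ‖y‖²)`,
so `g` is the pointwise maximum over `v : ℝ` of the functions `(x, y) ↦ ‖x + v • y‖² - v²`,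
attained at `v = ⟪x, y⟫ / (1 - ‖y‖²)`. Each of these is a convex function composed with a
linear map, and a maximum of convex functions that is attained everywhere is convex.
-/

open RealInnerProductSpace

section OrderedModule

variable {𝕜 E ι β : Type*} [Semiring 𝕜] [PartialOrder 𝕜] [AddCommMonoid E] [SMul 𝕜 E]
  [AddCommMonoid β] [PartialOrder β] [IsOrderedAddMonoid β] [SMul 𝕜 β] [PosSMulMono 𝕜 β]

theorem ConvexOn.of_forall_le_of_exists_eq {s : Set E} {f : ι → E → β} {g : E → β}
    (hs : Convex 𝕜 s) (hf : ∀ i, ConvexOn 𝕜 s (f i)) (hle : ∀ i, ∀ x ∈ s, f i x ≤ g x)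
    (heq : ∀ x ∈ s, ∃ i, f i x = g x) : ConvexOn 𝕜 s g := by
  refine ⟨hs, fun x hx y hy a b ha hb hab => ?_⟩
  obtain ⟨i, hi⟩ := heq _ (hs hx hy ha hb hab)
  calc g (a • x + b • y) = f i (a • x + b • y) := hi.symm
    _ ≤ a • f i x + b • f i y := (hf i).2 hx hy ha hb hab
    _ ≤ a • g x + b • g y := by
      gcongr
      · exact hle i x hx
      · exact hle i y hy

end OrderedModule

section NormedSpace

variable {E F : Type*} [SeminormedAddCommGroup E] [NormedSpace ℝ E] [AddCommMonoid F]
  [Module ℝ F]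

theorem convex_setOf_norm_snd_lt_one : Convex ℝ {p : F × E | ‖p.2‖ < 1} := by
  simpa [Set.preimage, mem_ball_zero_iff] using
    (convex_ball (0 : E) 1).linear_preimage (LinearMap.snd ℝ F E)

theorem convexOn_univ_norm_sq : ConvexOn ℝ Set.univ fun x : E => ‖x‖ ^ 2 :=
  (convexOn_norm convex_univ).pow (fun _ _ => norm_nonneg _) 2

theorem convexOn_norm_add_smul_sq_sub_sq (v : ℝ) :
    ConvexOn ℝ Set.univ fun p : E × E => ‖p.1 + v • p.2‖ ^ 2 - v ^ 2 := by
  refine ((convexOn_univ_norm_sq.comp_linearMap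
    (LinearMap.fst ℝ E E + v • LinearMap.snd ℝ E E)).add_const (-v ^ 2)).congr fun p _ => ?_
  simp [sub_eq_add_neg]

end NormedSpace

section InnerProductSpace

variable {E : Type*} [NormedAddCommGroup E] [InnerProductSpace ℝ E]

theorem norm_add_smul_sq_sub_sq_eq {y : E} (hy : 1 - ‖y‖ ^ 2 ≠ 0) (x : E) (v : ℝ) :
    ‖x + v • y‖ ^ 2 - v ^ 2 = ‖x‖ ^ 2 + ⟪x, y⟫ ^ 2 / (1 - ‖y‖ ^ 2)
      - (⟪x, y⟫ - v * (1 - ‖y‖ ^ 2)) ^ 2 / (1 - ‖y‖ ^ 2) := by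
  rw [norm_add_sq_real, norm_smul, inner_smul_right, Real.norm_eq_abs, mul_pow, sq_abs]
  field_simp
  ring

theorem norm_add_smul_sq_sub_sq_le {y : E} (hy : ‖y‖ < 1) (x : E) (v : ℝ) :
    ‖x + v • y‖ ^ 2 - v ^ 2 ≤ ‖x‖ ^ 2 + ⟪x, y⟫ ^ 2 / (1 - ‖y‖ ^ 2) := by
  have hd : 0 < 1 - ‖y‖ ^ 2 := by nlinarith [norm_nonneg y]
  rw [norm_add_smul_sq_sub_sq_eq hd.ne']
  exact sub_le_self _ (by positivity)

theorem norm_add_smul_sq_sub_sq_of_eq_div {y : E} (hy : ‖y‖ < 1) (x : E) :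
    ‖x + (⟪x, y⟫ / (1 - ‖y‖ ^ 2)) • y‖ ^ 2 - (⟪x, y⟫ / (1 - ‖y‖ ^ 2)) ^ 2
      = ‖x‖ ^ 2 + ⟪x, y⟫ ^ 2 / (1 - ‖y‖ ^ 2) := by
  have hd : 0 < 1 - ‖y‖ ^ 2 := by nlinarith [norm_nonneg y]
  rw [norm_add_smul_sq_sub_sq_eq hd.ne', div_mul_cancel₀ _ hd.ne', sub_self]
  simp

theorem convexOn_norm_sq_add_inner_sq_div :
    ConvexOn ℝ {p : E × E | ‖p.2‖ < 1} fun p => ‖p.1‖ ^ 2 + ⟪p.1, p.2⟫ ^ 2 / (1 - ‖p.2‖ ^ 2) :=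
  .of_forall_le_of_exists_eq convex_setOf_norm_snd_lt_one
    (fun v => (convexOn_norm_add_smul_sq_sub_sq v).subset (Set.subset_univ _)
      convex_setOf_norm_snd_lt_one)
    (fun v p hp => norm_add_smul_sq_sub_sq_le hp p.1 v)
    (fun p hp => ⟨_, norm_add_smul_sq_sub_sq_of_eq_div hp p.1⟩)

end InnerProductSpace

/-- The set `{(x,y) : ‖y‖ < 1}` is convex and
`g(x,y) = ‖x‖² + ⟪x,y⟫²/(1 − ‖y‖²)` is jointly convex on it. -/
theorem stmt_5 (n : ℕ) :
    Convex ℝ {p : EuclideanSpace ℝ (Fin n) × EuclideanSpace ℝ (Fin n) | ‖p.2‖ < 1} ∧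
    ConvexOn ℝ {p : EuclideanSpace ℝ (Fin n) × EuclideanSpace ℝ (Fin n) | ‖p.2‖ < 1}
      (fun p => ‖p.1‖ ^ 2 + ⟪p.1, p.2⟫ ^ 2 / (1 - ‖p.2‖ ^ 2)) :=
  ⟨convex_setOf_norm_snd_lt_one, convexOn_norm_sq_add_inner_sq_div⟩
end

section
/- Let c > 0 be a real number. Let Θ be the set of pairs (a, e) of continuous functions a, e : [−π, π] → ℝ such that (1/(2π))·∫_{−π}^{π} e(ω)² dω < c. Then Θ is a convex subset of the real vector space of pairs of continuous functions on [−π, π], and the functional ρ(a, e) = (1/(2π))·∫_{−π}^{π} a(ω)² dω + ((1/(2π))·∫_{−π}^{π} a(ω)·e(ω) dω)² / (c − (1/(2π))·∫_{−π}^{π} e(ω)² dω) is convex on Θ. -/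
open Real MeasureTheory

namespace Stmt6Aux

noncomputable def Qi (f : ℝ → ℝ) : ℝ := (1 / (2 * π)) * (∫ ω in (-π)..π, f ω ^ 2)

noncomputable def Bi (f g : ℝ → ℝ) : ℝ := (1 / (2 * π)) * (∫ ω in (-π)..π, f ω * g ω)

lemma pi_le : (-π : ℝ) ≤ π := by linarith [pi_pos]

lemma ii_mul {f g : ℝ → ℝ} (hf : ContinuousOn f (Set.Icc (-π) π))
    (hg : ContinuousOn g (Set.Icc (-π) π)) :
    IntervalIntegrable (fun ω => f ω * g ω) volume (-π) π := by
  apply ContinuousOn.intervalIntegrable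
  rw [Set.uIcc_of_le pi_le]
  exact hf.mul hg

lemma master {f g : ℝ → ℝ} (hf : ContinuousOn f (Set.Icc (-π) π))
    (hg : ContinuousOn g (Set.Icc (-π) π)) (s t : ℝ) :
    (∫ ω in (-π)..π, (s * f ω + t * g ω) ^ 2)
      = s ^ 2 * (∫ ω in (-π)..π, f ω ^ 2) + 2 * s * t * (∫ ω in (-π)..π, f ω * g ω)
        + t ^ 2 * (∫ ω in (-π)..π, g ω ^ 2) := by
  have hff := ii_mul hf hf
  have hfg := ii_mul hf hg
  have hgg := ii_mul hg hg
  have h1 : (∫ ω in (-π)..π, (s * f ω + t * g ω) ^ 2)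
      = ∫ ω in (-π)..π, (s ^ 2 * (f ω * f ω) + (2 * s * t * (f ω * g ω)
        + t ^ 2 * (g ω * g ω))) := by
    apply intervalIntegral.integral_congr
    intro ω _
    ring
  rw [h1, intervalIntegral.integral_add (hff.const_mul _)
      ((hfg.const_mul _).add (hgg.const_mul _)),
    intervalIntegral.integral_add (hfg.const_mul _) (hgg.const_mul _),
    intervalIntegral.integral_const_mul, intervalIntegral.integral_const_mul,
    intervalIntegral.integral_const_mul]
  have e1 : (∫ ω in (-π)..π, f ω * f ω) = ∫ ω in (-π)..π, f ω ^ 2 := by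
    apply intervalIntegral.integral_congr; intro ω _; ring
  have e2 : (∫ ω in (-π)..π, g ω * g ω) = ∫ ω in (-π)..π, g ω ^ 2 := by
    apply intervalIntegral.integral_congr; intro ω _; ring
  rw [e1, e2]; ring

lemma K_nonneg : (0:ℝ) ≤ 1 / (2 * π) := by positivity

/-- Scaled expansion. -/
lemma Q_expand {f g : ℝ → ℝ} (hf : ContinuousOn f (Set.Icc (-π) π))
    (hg : ContinuousOn g (Set.Icc (-π) π)) (s t : ℝ) :
    Qi (fun ω => s * f ω + t * g ω) = s ^ 2 * Qi f + 2 * s * t * Bi f g + t ^ 2 * Qi g := by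
  unfold Qi Bi
  rw [master hf hg s t]
  ring

lemma Q_nonneg (f : ℝ → ℝ) : 0 ≤ Qi f := by
  apply mul_nonneg K_nonneg
  apply intervalIntegral.integral_nonneg pi_le
  intro ω _
  positivity

lemma two_B_le {f g : ℝ → ℝ} (hf : ContinuousOn f (Set.Icc (-π) π))
    (hg : ContinuousOn g (Set.Icc (-π) π)) :
    2 * Bi f g ≤ Qi f + Qi g := by
  have h := Q_nonneg (fun ω => 1 * f ω + (-1) * g ω)
  rw [Q_expand hf hg 1 (-1)] at h
  nlinarith

/-- Convexity inequality for `Qi`. -/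
lemma Q_comb_le {f g : ℝ → ℝ} (hf : ContinuousOn f (Set.Icc (-π) π))
    (hg : ContinuousOn g (Set.Icc (-π) π)) {a b : ℝ} (ha : 0 ≤ a) (hb : 0 ≤ b)
    (hab : a + b = 1) :
    Qi (fun ω => a * f ω + b * g ω) ≤ a * Qi f + b * Qi g := by
  rw [Q_expand hf hg a b]
  have hB := two_B_le hf hg
  have hb' : b = 1 - a := by linarith
  subst hb'
  nlinarith [mul_nonneg (mul_nonneg ha hb) (by linarith : (0:ℝ) ≤ Qi f + Qi g - 2 * Bi f g)]

end Stmt6Aux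

open Stmt6Aux

/-- Lemma 5 of the paper: the domain `Θ_ρ` is convex and the functional
`ρ(a,e)` is convex on it (with `c = σ² + 1`). -/
theorem stmt_6 (c : ℝ) (hc : 0 < c) :
    Convex ℝ {p : (ℝ → ℝ) × (ℝ → ℝ) |
        ContinuousOn p.1 (Set.Icc (-π) π) ∧ ContinuousOn p.2 (Set.Icc (-π) π) ∧
        (1 / (2 * π)) * (∫ ω in (-π)..π, p.2 ω ^ 2) < c} ∧
    ConvexOn ℝ {p : (ℝ → ℝ) × (ℝ → ℝ) |
        ContinuousOn p.1 (Set.Icc (-π) π) ∧ ContinuousOn p.2 (Set.Icc (-π) π) ∧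
        (1 / (2 * π)) * (∫ ω in (-π)..π, p.2 ω ^ 2) < c}
      (fun p => (1 / (2 * π)) * (∫ ω in (-π)..π, p.1 ω ^ 2) +
        ((1 / (2 * π)) * (∫ ω in (-π)..π, p.1 ω * p.2 ω)) ^ 2 /
          (c - (1 / (2 * π)) * (∫ ω in (-π)..π, p.2 ω ^ 2))) := by
  -- convexity of the set
  have hset : Convex ℝ {p : (ℝ → ℝ) × (ℝ → ℝ) |
        ContinuousOn p.1 (Set.Icc (-π) π) ∧ ContinuousOn p.2 (Set.Icc (-π) π) ∧
        (1 / (2 * π)) * (∫ ω in (-π)..π, p.2 ω ^ 2) < c} := by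
    intro x hx y hy a b ha hb hab
    obtain ⟨hx1, hx2, hxQ⟩ := hx
    obtain ⟨hy1, hy2, hyQ⟩ := hy
    have hz1 : (a • x + b • y).1 = fun ω => a * x.1 ω + b * y.1 ω := rfl
    have hz2 : (a • x + b • y).2 = fun ω => a * x.2 ω + b * y.2 ω := rfl
    have hz1c : ContinuousOn (fun ω => a * x.1 ω + b * y.1 ω) (Set.Icc (-π) π) :=
      (continuousOn_const.mul hx1).add (continuousOn_const.mul hy1)
    have hz2c : ContinuousOn (fun ω => a * x.2 ω + b * y.2 ω) (Set.Icc (-π) π) :=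
      (continuousOn_const.mul hx2).add (continuousOn_const.mul hy2)
    have hQlt : Qi (fun ω => a * x.2 ω + b * y.2 ω) < c := by
      have h1 : Qi (fun ω => a * x.2 ω + b * y.2 ω) ≤ a * Qi x.2 + b * Qi y.2 :=
        Q_comb_le hx2 hy2 ha hb hab
      have hxQ' : Qi x.2 < c := hxQ
      have hyQ' : Qi y.2 < c := hyQ
      rcases eq_or_lt_of_le ha with h0 | h0
      · have hb1 : b = 1 := by linarith
        calc Qi (fun ω => a * x.2 ω + b * y.2 ω) ≤ a * Qi x.2 + b * Qi y.2 := h1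
          _ = Qi y.2 := by rw [← h0, hb1]; ring
          _ < c := hyQ'
      · have h2 : a * Qi x.2 < a * c := by exact (mul_lt_mul_iff_right₀ h0).2 hxQ'
        have h3 : b * Qi y.2 ≤ b * c := mul_le_mul_of_nonneg_left hyQ'.le hb
        calc Qi (fun ω => a * x.2 ω + b * y.2 ω) ≤ a * Qi x.2 + b * Qi y.2 := h1
          _ < a * c + b * c := by linarith
          _ = c := by rw [← add_mul, hab, one_mul]
    refine ⟨?_, ?_, ?_⟩
    · rw [hz1]; exact hz1c
    · rw [hz2]; exact hz2c
    · show Qi (a • x + b • y).2 < c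
      rw [hz2]; exact hQlt
  refine ⟨hset, hset, ?_⟩
  intro x hx y hy a b ha hb hab
  obtain ⟨hx1, hx2, hxQ⟩ := hx
  obtain ⟨hy1, hy2, hyQ⟩ := hy
  have hxQ' : Qi x.2 < c := hxQ
  have hyQ' : Qi y.2 < c := hyQ
  -- the combined point
  set z1 : ℝ → ℝ := fun ω => a * x.1 ω + b * y.1 ω with hz1def
  set z2 : ℝ → ℝ := fun ω => a * x.2 ω + b * y.2 ω with hz2def
  have hz1 : (a • x + b • y).1 = z1 := rfl
  have hz2 : (a • x + b • y).2 = z2 := rfl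
  have hz1c : ContinuousOn z1 (Set.Icc (-π) π) :=
    (continuousOn_const.mul hx1).add (continuousOn_const.mul hy1)
  have hz2c : ContinuousOn z2 (Set.Icc (-π) π) :=
    (continuousOn_const.mul hx2).add (continuousOn_const.mul hy2)
  obtain ⟨-, -, hzQ⟩ := hset (Set.mem_setOf.2 ⟨hx1, hx2, hxQ⟩)
      (Set.mem_setOf.2 ⟨hy1, hy2, hyQ⟩) ha hb hab
  have hzQ' : Qi z2 < c := hzQ
  -- rewrite the goal in terms of Qi / Bi
  simp only [smul_eq_mul]
  show Qi (a • x + b • y).1 + Bi (a • x + b • y).1 (a • x + b • y).2 ^ 2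
        / (c - Qi (a • x + b • y).2)
      ≤ a * (Qi x.1 + Bi x.1 x.2 ^ 2 / (c - Qi x.2))
        + b * (Qi y.1 + Bi y.1 y.2 ^ 2 / (c - Qi y.2))
  rw [hz1, hz2]
  set dz := c - Qi z2 with hdzdef
  have hdz : 0 < dz := by simp only [hdzdef]; linarith
  set t := Bi z1 z2 / dz with htdef
  -- optimal value equality at z
  have key1 : Qi z1 + Bi z1 z2 ^ 2 / dz
      = Qi (fun ω => 1 * z1 ω + t * z2 ω) - c * t ^ 2 := by
    rw [Q_expand hz1c hz2c 1 t]
    have : Bi z1 z2 ^ 2 / dz = 2 * t * Bi z1 z2 + t ^ 2 * Qi z2 - c * t ^ 2 := by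
      rw [htdef]
      field_simp
      ring
    rw [this]; ring
  -- z1 + t z2 is the combination of u, v
  set u : ℝ → ℝ := fun ω => x.1 ω + t * x.2 ω with hudef
  set v : ℝ → ℝ := fun ω => y.1 ω + t * y.2 ω with hvdef
  have huc : ContinuousOn u (Set.Icc (-π) π) := hx1.add (continuousOn_const.mul hx2)
  have hvc : ContinuousOn v (Set.Icc (-π) π) := hy1.add (continuousOn_const.mul hy2)
  have hcomb : (fun ω => 1 * z1 ω + t * z2 ω) = fun ω => a * u ω + b * v ω := by
    funext ω
    simp only [hz1def, hz2def, hudef, hvdef]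
    ring
  have hQcomb : Qi (fun ω => 1 * z1 ω + t * z2 ω) ≤ a * Qi u + b * Qi v := by
    rw [hcomb]; exact Q_comb_le huc hvc ha hb hab
  -- bound Qi u - c t² by ρ x
  have hux : Qi u - c * t ^ 2 ≤ Qi x.1 + Bi x.1 x.2 ^ 2 / (c - Qi x.2) := by
    have he : Qi u = Qi x.1 + 2 * t * Bi x.1 x.2 + t ^ 2 * Qi x.2 := by
      have := Q_expand hx1 hx2 1 t
      simp only [one_mul, one_pow] at this
      rw [hudef]
      simpa using this
    rw [he]
    have hdx : 0 < c - Qi x.2 := by linarith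
    have h : 2 * t * Bi x.1 x.2 - t ^ 2 * (c - Qi x.2) ≤ Bi x.1 x.2 ^ 2 / (c - Qi x.2) := by
      rw [le_div_iff₀ hdx]
      nlinarith [sq_nonneg (Bi x.1 x.2 - t * (c - Qi x.2))]
    linarith
  have hvy : Qi v - c * t ^ 2 ≤ Qi y.1 + Bi y.1 y.2 ^ 2 / (c - Qi y.2) := by
    have he : Qi v = Qi y.1 + 2 * t * Bi y.1 y.2 + t ^ 2 * Qi y.2 := by
      have := Q_expand hy1 hy2 1 t
      simp only [one_mul, one_pow] at this
      rw [hvdef]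
      simpa using this
    rw [he]
    have hdy : 0 < c - Qi y.2 := by linarith
    have h : 2 * t * Bi y.1 y.2 - t ^ 2 * (c - Qi y.2) ≤ Bi y.1 y.2 ^ 2 / (c - Qi y.2) := by
      rw [le_div_iff₀ hdy]
      nlinarith [sq_nonneg (Bi y.1 y.2 - t * (c - Qi y.2))]
    linarith
  have h1 : a * (Qi u - c * t ^ 2) ≤ a * (Qi x.1 + Bi x.1 x.2 ^ 2 / (c - Qi x.2)) :=
    mul_le_mul_of_nonneg_left hux ha
  have h2 : b * (Qi v - c * t ^ 2) ≤ b * (Qi y.1 + Bi y.1 y.2 ^ 2 / (c - Qi y.2)) :=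
    mul_le_mul_of_nonneg_left hvy hb
  have hab' : a * (c * t ^ 2) + b * (c * t ^ 2) = c * t ^ 2 := by
    rw [← add_mul, hab]; ring
  calc Qi z1 + Bi z1 z2 ^ 2 / dz
      = Qi (fun ω => 1 * z1 ω + t * z2 ω) - c * t ^ 2 := key1
    _ ≤ a * Qi u + b * Qi v - c * t ^ 2 := by linarith
    _ = a * (Qi u - c * t ^ 2) + b * (Qi v - c * t ^ 2) := by
        rw [mul_sub, mul_sub]; linarith [hab']
    _ ≤ a * (Qi x.1 + Bi x.1 x.2 ^ 2 / (c - Qi x.2))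
        + b * (Qi y.1 + Bi y.1 y.2 ^ 2 / (c - Qi y.2)) := by linarith
end

section
/- Let c > 0 and γ be real numbers, and let u, w : [−π, π] → [0, ∞) be continuous functions with (1/(2π))·∫_{−π}^{π} w(ω)² dω < c. Then (1/(2π))·∫_{−π}^{π} u(ω)² dω + ((1/(2π))·∫_{−π}^{π} u(ω)·w(ω) dω)² / (c − (1/(2π))·∫_{−π}^{π} w(ω)² dω) ≤ γ holds if and only if there exist continuous functions a, e : [−π, π] → ℝ such that a(ω) ≥ u(ω) and e(ω) ≥ w(ω) for all ω ∈ [−π, π], (1/(2π))·∫_{−π}^{π} e(ω)² dω < c, and ρ(a, e) ≤ γ, where ρ(a, e) = (1/(2π))·∫_{−π}^{π} a(ω)² dω + ((1/(2π))·∫_{−π}^{π} a(ω)·e(ω) dω)² / (c − (1/(2π))·∫_{−π}^{π} e(ω)² dω). -/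
open Real

lemma aux_intble {f : ℝ → ℝ} (hf : ContinuousOn f (Set.Icc (-π) π)) :
    IntervalIntegrable f MeasureTheory.volume (-π) π := by
  apply ContinuousOn.intervalIntegrable
  rwa [Set.uIcc_of_le (by linarith [pi_pos])]

/-- Relaxation equivalence (Lemma 6 of the paper): `φ₀(Q) ≤ γ` iff the
epigraph-type relaxation with majorizing continuous envelopes `a ≥ u`,
`e ≥ w` achieves `ρ(a,e) ≤ γ`. -/
theorem stmt_7 (c γ : ℝ) (hc : 0 < c) (u w : ℝ → ℝ)
    (hu : ContinuousOn u (Set.Icc (-π) π)) (hw : ContinuousOn w (Set.Icc (-π) π))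
    (hu0 : ∀ ω ∈ Set.Icc (-π) π, 0 ≤ u ω) (hw0 : ∀ ω ∈ Set.Icc (-π) π, 0 ≤ w ω)
    (hwc : (1 / (2 * π)) * (∫ ω in (-π)..π, w ω ^ 2) < c) :
    ((1 / (2 * π)) * (∫ ω in (-π)..π, u ω ^ 2) +
        ((1 / (2 * π)) * (∫ ω in (-π)..π, u ω * w ω)) ^ 2 /
          (c - (1 / (2 * π)) * (∫ ω in (-π)..π, w ω ^ 2)) ≤ γ) ↔
      ∃ a e : ℝ → ℝ,
        ContinuousOn a (Set.Icc (-π) π) ∧ ContinuousOn e (Set.Icc (-π) π) ∧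
        (∀ ω ∈ Set.Icc (-π) π, u ω ≤ a ω) ∧ (∀ ω ∈ Set.Icc (-π) π, w ω ≤ e ω) ∧
        (1 / (2 * π)) * (∫ ω in (-π)..π, e ω ^ 2) < c ∧
        (1 / (2 * π)) * (∫ ω in (-π)..π, a ω ^ 2) +
          ((1 / (2 * π)) * (∫ ω in (-π)..π, a ω * e ω)) ^ 2 /
            (c - (1 / (2 * π)) * (∫ ω in (-π)..π, e ω ^ 2)) ≤ γ := by
  have hpi : (-π : ℝ) ≤ π := by linarith [pi_pos]
  have h2pi : 0 < 1 / (2 * π) := by positivity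
  constructor
  · intro h
    exact ⟨u, w, hu, hw, fun ω _ => le_refl _, fun ω _ => le_refl _, hwc, h⟩
  · rintro ⟨a, e, ha, he, hua, hwe, hec, hρ⟩
    have ha0 : ∀ ω ∈ Set.Icc (-π) π, 0 ≤ a ω := fun ω hω => (hu0 ω hω).trans (hua ω hω)
    have he0 : ∀ ω ∈ Set.Icc (-π) π, 0 ≤ e ω := fun ω hω => (hw0 ω hω).trans (hwe ω hω)
    -- integrability
    have iu2 := aux_intble (f := fun ω => u ω ^ 2) (hu.pow 2)
    have ia2 := aux_intble (f := fun ω => a ω ^ 2) (ha.pow 2)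
    have iw2 := aux_intble (f := fun ω => w ω ^ 2) (hw.pow 2)
    have ie2 := aux_intble (f := fun ω => e ω ^ 2) (he.pow 2)
    have iuw := aux_intble (f := fun ω => u ω * w ω) (hu.mul hw)
    have iae := aux_intble (f := fun ω => a ω * e ω) (ha.mul he)
    have izero : IntervalIntegrable (fun _ : ℝ => (0:ℝ)) MeasureTheory.volume (-π) π :=
      intervalIntegrable_const
    -- integral inequalities
    have hI1 : (∫ ω in (-π)..π, u ω ^ 2) ≤ ∫ ω in (-π)..π, a ω ^ 2 := by
      apply intervalIntegral.integral_mono_on hpi iu2 ia2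
      intro ω hω
      exact pow_le_pow_left₀ (hu0 ω hω) (hua ω hω) 2
    have hI2 : (∫ ω in (-π)..π, u ω * w ω) ≤ ∫ ω in (-π)..π, a ω * e ω := by
      apply intervalIntegral.integral_mono_on hpi iuw iae
      intro ω hω
      exact mul_le_mul (hua ω hω) (hwe ω hω) (hw0 ω hω) (ha0 ω hω)
    have hI2' : (0:ℝ) ≤ ∫ ω in (-π)..π, u ω * w ω := by
      have := intervalIntegral.integral_mono_on hpi izero iuw
        (fun ω hω => mul_nonneg (hu0 ω hω) (hw0 ω hω))
      simpa using this
    have hI3 : (∫ ω in (-π)..π, w ω ^ 2) ≤ ∫ ω in (-π)..π, e ω ^ 2 := by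
      apply intervalIntegral.integral_mono_on hpi iw2 ie2
      intro ω hω
      exact pow_le_pow_left₀ (hw0 ω hω) (hwe ω hω) 2
    have hd' : 0 < c - (1 / (2 * π)) * (∫ ω in (-π)..π, e ω ^ 2) := by linarith
    have hdd : c - (1 / (2 * π)) * (∫ ω in (-π)..π, e ω ^ 2) ≤
        c - (1 / (2 * π)) * (∫ ω in (-π)..π, w ω ^ 2) := by nlinarith
    refine le_trans ?_ hρ
    have hnum : ((1 / (2 * π)) * (∫ ω in (-π)..π, u ω * w ω)) ^ 2 ≤
        ((1 / (2 * π)) * (∫ ω in (-π)..π, a ω * e ω)) ^ 2 := by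
      apply pow_le_pow_left₀ (by positivity)
      exact mul_le_mul_of_nonneg_left hI2 h2pi.le
    have hdiv : ((1 / (2 * π)) * (∫ ω in (-π)..π, u ω * w ω)) ^ 2 /
          (c - (1 / (2 * π)) * (∫ ω in (-π)..π, w ω ^ 2)) ≤
        ((1 / (2 * π)) * (∫ ω in (-π)..π, a ω * e ω)) ^ 2 /
          (c - (1 / (2 * π)) * (∫ ω in (-π)..π, e ω ^ 2)) :=
      div_le_div₀ (by positivity) hnum hd' hdd
    have : (1 / (2 * π)) * (∫ ω in (-π)..π, u ω ^ 2) ≤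
        (1 / (2 * π)) * (∫ ω in (-π)..π, a ω ^ 2) :=
      mul_le_mul_of_nonneg_left hI1 h2pi.le
    linarith
end

section
/- Let c > 0 be a real number and let A, B, E, F, L : [−π, π] → ℂ be continuous functions. Let Θ be the set of continuous functions Q : [−π, π] → ℂ such that (1/(2π))·∫_{−π}^{π} |E(ω)Q(ω) + F(ω)|² dω < c. Then Θ is a convex subset of the real vector space of continuous complex-valued functions on [−π, π], and the functional φ(Q) = (1/(2π))·∫_{−π}^{π} |L(ω) + A(ω)Q(ω) + B(ω)|² dω + ((1/(2π))·∫_{−π}^{π} |A(ω)Q(ω) + B(ω)|·|E(ω)Q(ω) + F(ω)| dω)² / (c − (1/(2π))·∫_{−π}^{π} |E(ω)Q(ω) + F(ω)|² dω) is convex on Θ. -/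
/-!
For `d > 0` and `a ≥ 0`, `a ^ 2 / d` is the maximum over `t ≥ 0` of `2 t a - t ^ 2 d`, attained at
`t = a / d`. Hence, writing `Z = AQ + B` and `W = EQ + F`, the functional `φ` is the pointwise
maximum over `t ≥ 0` of `Q ↦ k ∫ (|L + Z|² + 2t|Z||W| + t²|W|²) - t² c` with `k = 1 / (2π)`.
Each of these is convex: the integrand equals `|L|² + 2 Re (L̄ Z) + (|Z| + t|W|)²`, a constant plus
an affine function plus the square of a nonnegative convex function of `Q`. The domain is a
strict sublevel set of the convex functional `Q ↦ k ∫ |W|²`.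
-/

open Real Set MeasureTheory
open scoped NNReal

section Convexity

variable {𝕜 E β ι : Type*} [Semiring 𝕜] [PartialOrder 𝕜] [AddCommMonoid E] [SMul 𝕜 E]
  [AddCommMonoid β] [PartialOrder β] [IsOrderedAddMonoid β] [Module 𝕜 β] [PosSMulMono 𝕜 β]

theorem convexOn_of_forall_isGreatest {s : Set E} {f : E → β} {g : ι → E → β}
    (hg : ∀ i, ConvexOn 𝕜 s (g i)) (hf : ∀ x ∈ s, IsGreatest (range fun i => g i x) (f x)) :
    ConvexOn 𝕜 s f := by
  refine ⟨fun x hx => (hg (hf x hx).1.choose).1 hx, fun x hx y hy a b ha hb hab => ?_⟩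
  obtain ⟨i, hi⟩ := (hf _ ((hg (hf x hx).1.choose).1 hx hy ha hb hab)).1
  calc f (a • x + b • y) = g i (a • x + b • y) := hi.symm
    _ ≤ a • g i x + b • g i y := (hg i).2 hx hy ha hb hab
    _ ≤ a • f x + b • f y := by
      gcongr
      exacts [(hf x hx).2 ⟨i, rfl⟩, (hf y hy).2 ⟨i, rfl⟩]

end Convexity

theorem two_mul_mul_sub_sq_mul_le_sq_div (t a : ℝ) {d : ℝ} (hd : 0 < d) :
    2 * t * a - t ^ 2 * d ≤ a ^ 2 / d := by
  have : a ^ 2 / d - (2 * t * a - t ^ 2 * d) = (a - t * d) ^ 2 / d := by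
    field_simp
    ring
  linarith [div_nonneg (sq_nonneg (a - t * d)) hd.le]

theorem convexOn_add_sq_div_sub {X : Type*} [AddCommMonoid X] [SMul ℝ X] {s : Set X}
    {P a e : X → ℝ} {c : ℝ} (ha : ∀ x ∈ s, 0 ≤ a x) (he : ∀ x ∈ s, e x < c)
    (h : ∀ t : ℝ, 0 ≤ t → ConvexOn ℝ s fun x => P x + 2 * t * a x + t ^ 2 * e x) :
    ConvexOn ℝ s fun x => P x + a x ^ 2 / (c - e x) := by
  refine convexOn_of_forall_isGreatest
    (g := fun (t : ℝ≥0) x => P x + 2 * t * a x + t ^ 2 * e x - t ^ 2 * c)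
    (fun t => ((h t t.2).add_const (-(t ^ 2 * c))).congr fun x _ => by
      simp only [Pi.add_apply]
      ring)
    fun x hx => ?_
  have hd : 0 < c - e x := sub_pos.2 (he x hx)
  refine ⟨⟨(a x / (c - e x)).toNNReal, ?_⟩, ?_⟩
  · beta_reduce
    rw [Real.coe_toNNReal _ (div_nonneg (ha x hx) hd.le)]
    field_simp
    ring
  · rintro _ ⟨t, rfl⟩
    linarith [two_mul_mul_sub_sq_mul_le_sq_div t (a x) hd]

theorem convexOn_intervalIntegral_comp {E : Type*} [AddCommMonoid E] [SMul ℝ E] {a b : ℝ}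
    (hab : a ≤ b) {s : Set (ℝ → E)} (hs : Convex ℝ s) {G : ℝ → E → ℝ}
    (hG : ∀ ω ∈ Icc a b, ConvexOn ℝ univ (G ω))
    (hint : ∀ Q ∈ s, IntervalIntegrable (fun ω => G ω (Q ω)) volume a b) :
    ConvexOn ℝ s fun Q => ∫ ω in a..b, G ω (Q ω) := by
  refine ⟨hs, fun Q₀ h₀ Q₁ h₁ θ τ hθ hτ hθτ => ?_⟩
  have h₀' := (hint Q₀ h₀).const_mul θ
  have h₁' := (hint Q₁ h₁).const_mul τ
  calc ∫ ω in a..b, G ω ((θ • Q₀ + τ • Q₁) ω)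
      ≤ ∫ ω in a..b, θ * G ω (Q₀ ω) + τ * G ω (Q₁ ω) :=
        intervalIntegral.integral_mono_on hab (hint _ (hs h₀ h₁ hθ hτ hθτ)) (h₀'.add h₁')
          fun ω hω => (hG ω hω).2 trivial trivial hθ hτ hθτ
    _ = θ • (∫ ω in a..b, G ω (Q₀ ω)) + τ • ∫ ω in a..b, G ω (Q₁ ω) := by
        rw [intervalIntegral.integral_add h₀' h₁', intervalIntegral.integral_const_mul,
          intervalIntegral.integral_const_mul, smul_eq_mul, smul_eq_mul]

section AffineNorm

variable {V H : Type*} [AddCommGroup V] [Module ℝ V] [SeminormedAddCommGroup H]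

section NormedSpace

variable [NormedSpace ℝ H]

theorem convexOn_norm_affineMap (z : V →ᵃ[ℝ] H) : ConvexOn ℝ univ fun v => ‖z v‖ := by
  have := convexOn_univ_norm.comp_affineMap z
  rwa [preimage_univ] at this

theorem convexOn_norm_affineMap_sq (z : V →ᵃ[ℝ] H) : ConvexOn ℝ univ fun v => ‖z v‖ ^ 2 :=
  (convexOn_norm_affineMap z).pow (fun _ _ => norm_nonneg _) 2

end NormedSpace

theorem convexOn_norm_add_sq_add_mul_norm_mul_norm [InnerProductSpace ℝ H] (l : H) (z w : V →ᵃ[ℝ] H) {t : ℝ}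
    (ht : 0 ≤ t) :
    ConvexOn ℝ univ fun v => ‖l + z v‖ ^ 2 + 2 * t * (‖z v‖ * ‖w v‖) + t ^ 2 * ‖w v‖ ^ 2 := by
  have hsq : ConvexOn ℝ univ fun v => (‖z v‖ + t * ‖w v‖) ^ 2 :=
    ((convexOn_norm_affineMap z).add ((convexOn_norm_affineMap w).smul ht)).pow
      (fun _ _ => add_nonneg (norm_nonneg _) (smul_nonneg ht (norm_nonneg _))) 2
  have hinner : ConvexOn ℝ univ fun v => inner ℝ l (z v) := by
    have := (LinearMap.convexOn (innerₛₗ ℝ l) convex_univ).comp_affineMap z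
    rwa [preimage_univ] at this
  refine (((hinner.smul zero_le_two).add hsq).add_const (‖l‖ ^ 2)).congr fun v _ => ?_
  simp only [Pi.add_apply, smul_eq_mul, norm_add_sq_real]
  ring

end AffineNorm

noncomputable def mulAddAffineMap (a b : ℂ) : ℂ →ᵃ[ℝ] ℂ :=
  (LinearMap.mulLeft ℝ a).toAffineMap + AffineMap.const ℝ ℂ b

@[simp]
theorem mulAddAffineMap_apply (a b q : ℂ) : mulAddAffineMap a b q = a * q + b := by
  simp [mulAddAffineMap]

theorem convexOn_norm_mul_add_sq (e f : ℂ) : ConvexOn ℝ univ fun q : ℂ => ‖e * q + f‖ ^ 2 := by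
  simpa using convexOn_norm_affineMap_sq (mulAddAffineMap e f)

theorem convexOn_norm_add_mul_add_sq_add_mul_norm_mul_norm (l a b e f : ℂ) {t : ℝ} (ht : 0 ≤ t) :
    ConvexOn ℝ univ fun q : ℂ => ‖l + a * q + b‖ ^ 2 + 2 * t * (‖a * q + b‖ * ‖e * q + f‖)
      + t ^ 2 * ‖e * q + f‖ ^ 2 := by
  simpa [add_assoc] using
    convexOn_norm_add_sq_add_mul_norm_mul_norm l (mulAddAffineMap a b) (mulAddAffineMap e f) ht

theorem stmt_8_general (c : ℝ) (A B E F L : ℝ → ℂ)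
    (hA : ContinuousOn A (Set.Icc (-π) π)) (hB : ContinuousOn B (Set.Icc (-π) π))
    (hE : ContinuousOn E (Set.Icc (-π) π)) (hF : ContinuousOn F (Set.Icc (-π) π))
    (hL : ContinuousOn L (Set.Icc (-π) π)) :
    Convex ℝ {Q : ℝ → ℂ | ContinuousOn Q (Set.Icc (-π) π) ∧
        (1 / (2 * π)) * (∫ ω in (-π)..π, ‖E ω * Q ω + F ω‖ ^ 2) < c} ∧
    ConvexOn ℝ {Q : ℝ → ℂ | ContinuousOn Q (Set.Icc (-π) π) ∧
        (1 / (2 * π)) * (∫ ω in (-π)..π, ‖E ω * Q ω + F ω‖ ^ 2) < c}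
      (fun Q => (1 / (2 * π)) * (∫ ω in (-π)..π, ‖L ω + A ω * Q ω + B ω‖ ^ 2) +
        ((1 / (2 * π)) * (∫ ω in (-π)..π,
            ‖A ω * Q ω + B ω‖ * ‖E ω * Q ω + F ω‖)) ^ 2 /
          (c - (1 / (2 * π)) * (∫ ω in (-π)..π, ‖E ω * Q ω + F ω‖ ^ 2))) := by
  set C : Set (ℝ → ℂ) := {Q | ContinuousOn Q (Icc (-π) π)}
  have hC : Convex ℝ C := fun _ h₀ _ h₁ θ τ _ _ _ => (h₀.const_smul θ).add (h₁.const_smul τ)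
  have hπ : -π ≤ π := by linarith [pi_pos]
  have hk : 0 ≤ 1 / (2 * π) := by positivity
  have hint {g : ℝ → ℝ} (hg : ContinuousOn g (Icc (-π) π)) : IntervalIntegrable g volume (-π) π :=
    hg.intervalIntegrable_of_Icc hπ
  have hdom := ((convexOn_intervalIntegral_comp hπ hC
    (fun ω _ => convexOn_norm_mul_add_sq (E ω) (F ω))
    fun Q (hQ : ContinuousOn Q _) => hint (by fun_prop)).smul hk).convex_lt c
  refine ⟨hdom, convexOn_add_sq_div_sub
    (fun Q _ => mul_nonneg hk (intervalIntegral.integral_nonneg hπ fun _ _ => by positivity))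
    (fun Q hQ => hQ.2) fun t ht => ?_⟩
  have hG := (convexOn_intervalIntegral_comp hπ hC
    (fun ω _ => convexOn_norm_add_mul_add_sq_add_mul_norm_mul_norm (L ω) (A ω) (B ω) (E ω) (F ω) ht)
    fun Q (hQ : ContinuousOn Q _) => hint (by fun_prop)).smul hk
  refine (hG.subset (fun Q hQ => hQ.1) hdom).congr fun Q hQ => ?_
  replace hQ : ContinuousOn Q (Icc (-π) π) := hQ.1
  simp only [smul_eq_mul]
  rw [intervalIntegral.integral_add (hint (by fun_prop)) (hint (by fun_prop)),
    intervalIntegral.integral_add (hint (by fun_prop)) (hint (by fun_prop)),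
    intervalIntegral.integral_const_mul, intervalIntegral.integral_const_mul]
  ring

/-- Theorem 2 of the paper: the domain `Θ_Q` is convex and the functional
`φ(Q) = ‖L + AQ + B‖₂² + ‖(AQ+B)(EQ+F)‖₁²/(c − ‖EQ+F‖₂²)` is convex on it. -/
theorem stmt_8 (c : ℝ) (hc : 0 < c) (A B E F L : ℝ → ℂ)
    (hA : ContinuousOn A (Set.Icc (-π) π)) (hB : ContinuousOn B (Set.Icc (-π) π))
    (hE : ContinuousOn E (Set.Icc (-π) π)) (hF : ContinuousOn F (Set.Icc (-π) π))
    (hL : ContinuousOn L (Set.Icc (-π) π)) :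
    Convex ℝ {Q : ℝ → ℂ | ContinuousOn Q (Set.Icc (-π) π) ∧
        (1 / (2 * π)) * (∫ ω in (-π)..π, ‖E ω * Q ω + F ω‖ ^ 2) < c} ∧
    ConvexOn ℝ {Q : ℝ → ℂ | ContinuousOn Q (Set.Icc (-π) π) ∧
        (1 / (2 * π)) * (∫ ω in (-π)..π, ‖E ω * Q ω + F ω‖ ^ 2) < c}
      (fun Q => (1 / (2 * π)) * (∫ ω in (-π)..π, ‖L ω + A ω * Q ω + B ω‖ ^ 2) +
        ((1 / (2 * π)) * (∫ ω in (-π)..π,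
            ‖A ω * Q ω + B ω‖ * ‖E ω * Q ω + F ω‖)) ^ 2 /
          (c - (1 / (2 * π)) * (∫ ω in (-π)..π, ‖E ω * Q ω + F ω‖ ^ 2))) :=
  stmt_8_general c A B E F L hA hB hE hF hL
end

section
/- Let n ≥ 1 be an integer, let â, ê ∈ ℝⁿ, let δ, γ ∈ ℝ, and let s > 0 be a real number with (1/n)·êᵀê < s + 1. Consider the (n+2)×(n+2) real symmetric matrix M whose top-left n×n block is the identity matrix Iₙ, whose (n+1)-st column (restricted to the first n rows) is ê and whose (n+2)-nd column (restricted to the first n rows) is â, with the symmetric entries in the last two rows, and whose bottom-right 2×2 block is the diagonal matrix with entries n·(s + 1) and n·(γ − δ); i.e. M = [[Iₙ, ê, â], [êᵀ, n(s+1), 0], [âᵀ, 0, n(γ − δ)]]. Then M is positive semidefinite if and only if (1/n)·âᵀâ + ((1/n)·âᵀê)² / (s + 1 − (1/n)·êᵀê) + δ ≤ γ. -/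
/-!
Taking the Schur complement of the identity block reduces the condition to positive
semidefiniteness of `diag(n(s+1), n(γ-δ)) - Bᵀ B`, where `B = [ê â]`, i.e. of the 2×2 matrix
`[[n(s+1) - êᵀê, -âᵀê], [-âᵀê, n(γ-δ) - âᵀâ]]`. Its top-left entry is positive by the
hypothesis on `êᵀê`, so a second Schur complement turns this into the scalar inequality
`(âᵀê)² ≤ (n(s+1) - êᵀê)(n(γ-δ) - âᵀâ)`, which is the claim after dividing by `n²`.
-/

open Matrix

theorem Matrix.posSemidef_fromBlocks_one_iff {m k R : Type*} [Fintype m] [Finite k]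
    [DecidableEq m] [CommRing R] [PartialOrder R] [StarRing R] [StarOrderedRing R]
    [NoZeroDivisors R] (B : Matrix m k R) (D : Matrix k k R) :
    (fromBlocks 1 B Bᴴ D).PosSemidef ↔ (D - Bᴴ * B).PosSemidef := by
  let : Invertible (1 : Matrix m m R) := invertibleOne
  rw [PosDef.one.fromBlocks₁₁ B D, inv_one, Matrix.mul_one]

theorem Matrix.posSemidef_fin_two_iff {a b c : ℝ} (ha : 0 < a) :
    (!![a, b; b, c] : Matrix (Fin 2) (Fin 2) ℝ).PosSemidef ↔ b ^ 2 ≤ a * c := by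
  have quad (x : Fin 2 → ℝ) : star x ⬝ᵥ !![a, b; b, c] *ᵥ x =
      a * x 0 ^ 2 + 2 * b * x 0 * x 1 + c * x 1 ^ 2 := by
    simp [mulVec, dotProduct, Fin.sum_univ_two]
    ring
  constructor
  · intro h
    have := quad ![-b, a] ▸ h.dotProduct_mulVec_nonneg ![-b, a]
    simp only [cons_val_zero, cons_val_one, cons_val_fin_one, even_two, Even.neg_pow, mul_neg,
      neg_mul] at this
    nlinarith
  · intro h
    refine .of_dotProduct_mulVec_nonneg ?_ fun x => ?_
    · ext i j; fin_cases i <;> fin_cases j <;> rfl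
    rw [quad]
    refine nonneg_of_mul_nonneg_right ?_ ha
    calc 0 ≤ (a * x 0 + b * x 1) ^ 2 + (a * c - b ^ 2) * x 1 ^ 2 := by
          have := sub_nonneg.2 h; positivity
      _ = _ := by ring

section TwoCols

variable {m R : Type*} [Semiring R] [StarRing R] [TrivialStar R]

def twoCols (u v : m → R) : Matrix m (Fin 2) R := of fun i j => if j = 0 then u i else v i

theorem conjTranspose_twoCols (u v : m → R) :
    (twoCols u v)ᴴ = of fun j i => if j = 0 then u i else v i := by
  ext j i; simp [twoCols]

theorem conjTranspose_twoCols_mul_self [Fintype m] (u v : m → R) :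
    (twoCols u v)ᴴ * twoCols u v = !![u ⬝ᵥ u, u ⬝ᵥ v; v ⬝ᵥ u, v ⬝ᵥ v] := by
  ext i j; fin_cases i <;> fin_cases j <;> simp [twoCols, mul_apply, dotProduct]

end TwoCols

theorem sq_le_sub_mul_sub_iff {N t c E A P : ℝ} (hN : 0 < N) (hE : E < N * t) :
    P ^ 2 ≤ (N * t - E) * (N * c - A) ↔
      (1 / N) * A + ((1 / N) * P) ^ 2 / (t - (1 / N) * E) ≤ c := by
  have hd : t - (1 / N) * E = (N * t - E) / N := by field_simp
  have key : (N * t - E) * (N * c - A) - P ^ 2 = (N * (N * t - E)) *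
      (c - ((1 / N) * A + ((1 / N) * P) ^ 2 / (t - (1 / N) * E))) := by
    rw [hd]
    field_simp [(sub_pos.2 hE).ne']
    ring
  rw [← sub_nonneg, key, mul_nonneg_iff_of_pos_left (by nlinarith), sub_nonneg]

theorem stmt_9_general (n : ℕ) (hn : 1 ≤ n) (ahat ehat : Fin n → ℝ) (δ γ s : ℝ)
    (hE : (1 / (n : ℝ)) * (ehat ⬝ᵥ ehat) < s + 1) :
    (Matrix.fromBlocks (1 : Matrix (Fin n) (Fin n) ℝ)
        (Matrix.of fun i (j : Fin 2) => if j = 0 then ehat i else ahat i)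
        (Matrix.of fun (j : Fin 2) i => if j = 0 then ehat i else ahat i)
        !![(n : ℝ) * (s + 1), 0; 0, (n : ℝ) * (γ - δ)]).PosSemidef ↔
      (1 / (n : ℝ)) * (ahat ⬝ᵥ ahat) +
          ((1 / (n : ℝ)) * (ahat ⬝ᵥ ehat)) ^ 2 /
            (s + 1 - (1 / (n : ℝ)) * (ehat ⬝ᵥ ehat)) + δ ≤ γ := by
  have hN : (0 : ℝ) < n := by exact_mod_cast hn
  have hE' : ehat ⬝ᵥ ehat < n * (s + 1) := by
    rwa [← div_lt_iff₀' hN, ← one_div_mul_eq_div]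
  have hschur : !![(n : ℝ) * (s + 1), 0; 0, n * (γ - δ)] -
      !![ehat ⬝ᵥ ehat, ehat ⬝ᵥ ahat; ahat ⬝ᵥ ehat, ahat ⬝ᵥ ahat] =
      !![n * (s + 1) - ehat ⬝ᵥ ehat, -(ahat ⬝ᵥ ehat);
        -(ahat ⬝ᵥ ehat), n * (γ - δ) - ahat ⬝ᵥ ahat] := by
    rw [dotProduct_comm ehat ahat]; simp
  rw [← conjTranspose_twoCols, ← twoCols, posSemidef_fromBlocks_one_iff,
    conjTranspose_twoCols_mul_self, hschur, posSemidef_fin_two_iff (sub_pos.2 hE'), neg_sq,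
    sq_le_sub_mul_sub_iff hN hE', le_sub_iff_add_le]

/-- Semidefinite-programming reformulation (two Schur complement steps):
the LMI (29) is equivalent to the scalar inequality `ρₙ(â,ê) + δ ≤ γ`. -/
theorem stmt_9 (n : ℕ) (hn : 1 ≤ n) (ahat ehat : Fin n → ℝ) (δ γ s : ℝ)
    (hs : 0 < s)
    (hE : (1 / (n : ℝ)) * (ehat ⬝ᵥ ehat) < s + 1) :
    (Matrix.fromBlocks (1 : Matrix (Fin n) (Fin n) ℝ)
        (Matrix.of fun i (j : Fin 2) => if j = 0 then ehat i else ahat i)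
        (Matrix.of fun (j : Fin 2) i => if j = 0 then ehat i else ahat i)
        !![(n : ℝ) * (s + 1), 0; 0, (n : ℝ) * (γ - δ)]).PosSemidef ↔
      (1 / (n : ℝ)) * (ahat ⬝ᵥ ahat) +
          ((1 / (n : ℝ)) * (ahat ⬝ᵥ ehat)) ^ 2 /
            (s + 1 - (1 / (n : ℝ)) * (ehat ⬝ᵥ ehat)) + δ ≤ γ :=
  stmt_9_general n hn ahat ehat δ γ s hE
end
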